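/- Let P ⊆ ℝ^d be a d-polytope with 0 in its interior, n prime, and k a positive integer with kn ≥ d. For every point (x₁,…,xₙ) in the (n−1)-skeleton of C = P^n ∩ W_n^{⊕d}, there exists an index i with xᵢ ∈ P^{(k)}. -/

import Mathlib

/-!
For a convex set `P` and `x ∈ P`, let `L_P(x)` be the lineality space of the cone of feasible
directions of `P` at `x`, i.e. the directions `v` with `x ± t • v ∈ P` for small `t > 0`.
If `x` lies in an extreme subset `F` of `P`, then `L_P(x) ≤ vectorSpan F`. Conversely, if `P` is
a polytope, separating the feasible directions `v - x` (`v` a vertex) that lie outside `L_P(x)`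
from `L_P(x)` yields an exposed face through `x` whose direction space lies in `L_P(x)`; hence
`x ∉ P^{(k)}` forces `dim L_P(x) ≥ k + 1`.

If no `xᵢ` lies in `P^{(k)}`, the families `(wᵢ)` with `wᵢ ∈ L_P(xᵢ)` and `∑ wᵢ = 0` lie in
`L_C(x)` and form a space of dimension at least `n (k + 1) - d ≥ n`, whereas `x` lies in a face
of `C` of dimension at most `n - 1`, so `dim L_C(x) ≤ n - 1`.
-/

open Metric Set

def IsPolytope {E : Type*} [AddCommGroup E] [Module ℝ E] (P : Set E) : Prop :=
  ∃ V : Finset E, P = convexHull ℝ (V : Set E)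

noncomputable def polyDim {E : Type*} [AddCommGroup E] [Module ℝ E] (P : Set E) : ℕ :=
  Module.finrank ℝ (vectorSpan ℝ P)

/-- The `k`-skeleton of a polytope `P`: the union of all (exposed) faces of dimension at most `k`. -/
def skeleton {E : Type*} [AddCommGroup E] [Module ℝ E] [TopologicalSpace E]
    (P : Set E) (k : ℕ) : Set E :=
  {x | ∃ F : Set E, IsExposed ℝ P F ∧ polyDim F ≤ k ∧ x ∈ F}

open Filter Topology Module

lemma skeleton_subset {E : Type*} [AddCommGroup E] [Module ℝ E] [TopologicalSpace E]
    (P : Set E) (k : ℕ) : skeleton P k ⊆ P :=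
  fun _ ⟨_, hF, _, hxF⟩ => hF.subset hxF

lemma IsPolytope.convex {E : Type*} [AddCommGroup E] [Module ℝ E] {P : Set E}
    (hP : IsPolytope P) : Convex ℝ P := by
  obtain ⟨V, rfl⟩ := hP
  exact convex_convexHull ℝ _

section FeasibleCone

variable {E : Type*} [AddCommGroup E] [Module ℝ E]

def feasibleCone (P : Set E) (x : E) : PointedCone ℝ E :=
  PointedCone.hull ℝ ((x + ·) ⁻¹' P)

lemma mem_feasibleCone {P : Set E} (hP : Convex ℝ P) {x : E} (hx : x ∈ P) {v : E} :
    v ∈ feasibleCone P x ↔ ∃ t : ℝ, 0 < t ∧ x + t • v ∈ P := by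
  have hle : feasibleCone P x ≤ (ConvexCone.hull ℝ ((x + ·) ⁻¹' P)).toPointedCone
      (ConvexCone.subset_hull (by simpa using hx)) :=
    Submodule.span_le.2 ConvexCone.subset_hull
  constructor
  · intro hv
    obtain ⟨r, hr, hvr⟩ :=
      (ConvexCone.mem_hull_of_convex (hP.translate_preimage_right x)).1 (hle hv)
    exact ⟨r⁻¹, inv_pos.2 hr, (Set.mem_smul_set_iff_inv_smul_mem₀ hr.ne' _ _).1 hvr⟩
  · rintro ⟨t, ht, hvt⟩
    exact (PointedCone.smul_mem_iff _ ht).1 (PointedCone.subset_hull hvt)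

lemma mem_feasibleCone_iff_eventually {P : Set E} (hP : Convex ℝ P) {x : E} (hx : x ∈ P)
    {v : E} : v ∈ feasibleCone P x ↔ ∀ᶠ t in 𝓝[>] (0 : ℝ), x + t • v ∈ P := by
  rw [mem_feasibleCone hP hx]
  constructor
  · rintro ⟨t, ht, hvt⟩
    filter_upwards [Ioc_mem_nhdsGT ht] with s hs
    have := hP.add_smul_mem hx hvt (t := s / t)
      ⟨div_nonneg hs.1.le ht.le, (div_le_one ht).2 hs.2⟩
    rwa [smul_smul, div_mul_cancel₀ _ ht.ne'] at this
  · intro h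
    obtain ⟨t, hvt, ht⟩ := (h.and self_mem_nhdsWithin).exists
    exact ⟨t, ht, hvt⟩

lemma IsExtreme.lineal_feasibleCone_le_vectorSpan {C F : Set E} (hC : Convex ℝ C)
    (hF : IsExtreme ℝ C F) {x : E} (hx : x ∈ F) :
    (feasibleCone C x).lineal ≤ vectorSpan ℝ F := by
  intro v ⟨hv, hnv⟩
  obtain ⟨t, ht, hxt⟩ := (mem_feasibleCone hC (hF.subset hx)).1 hv
  obtain ⟨s, hs, hxs⟩ := (mem_feasibleCone hC (hF.subset hx)).1 hnv
  have hseg : x ∈ openSegment ℝ (x + t • v) (x + s • -v) := by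
    refine ⟨s / (s + t), t / (s + t), by positivity, by positivity, by field_simp, ?_⟩
    have : s + t ≠ 0 := by positivity
    match_scalars <;> field_simp; ring
  have htv : t • v ∈ vectorSpan ℝ F := by
    simpa using vsub_mem_vectorSpan ℝ (hF.left_mem_of_mem_openSegment hxt hxs hx hseg) hx
  exact (Submodule.smul_mem_iff _ ht.ne').1 htv

lemma Convex.setOf_forall_mem_sum_eq_zero {ι : Type*} [Fintype ι] {P : Set E}
    (hP : Convex ℝ P) : Convex ℝ {y : ι → E | (∀ i, y i ∈ P) ∧ ∑ i, y i = 0} := by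
  rintro y ⟨hyP, hy0⟩ z ⟨hzP, hz0⟩ a b ha hb hab
  refine ⟨fun i => hP (hyP i) (hzP i) ha hb hab, ?_⟩
  simp [Finset.sum_add_distrib, ← Finset.smul_sum, hy0, hz0]

lemma mem_lineal_feasibleCone_of_sum_eq_zero {ι : Type*} [Fintype ι] {P : Set E}
    (hP : Convex ℝ P) {x : ι → E} (hx : x ∈ {y : ι → E | (∀ i, y i ∈ P) ∧ ∑ i, y i = 0})
    {w : ι → E} (hw : ∀ i, w i ∈ (feasibleCone P (x i)).lineal) (hsum : ∑ i, w i = 0) :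
    w ∈ (feasibleCone {y : ι → E | (∀ i, y i ∈ P) ∧ ∑ i, y i = 0} x).lineal := by
  have key : ∀ u : ι → E, (∀ i, u i ∈ feasibleCone P (x i)) → ∑ i, u i = 0 →
      u ∈ feasibleCone {y : ι → E | (∀ i, y i ∈ P) ∧ ∑ i, y i = 0} x := by
    intro u hu hu0
    -- the filter form provides a step size that works for all coordinates at once
    rw [mem_feasibleCone_iff_eventually hP.setOf_forall_mem_sum_eq_zero hx]
    filter_upwards [eventually_all.2 fun i =>
      (mem_feasibleCone_iff_eventually hP (hx.1 i)).1 (hu i)] with t ht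
    refine ⟨ht, ?_⟩
    simp [Finset.sum_add_distrib, ← Finset.smul_sum, hx.2, hu0]
  exact ⟨key w (fun i => (hw i).1) hsum, key (-w) (fun i => (hw i).2) (by simp [hsum])⟩

end FeasibleCone

lemma sum_finrank_le_finrank_add_finrank {K E ι : Type*} [Field K] [AddCommGroup E] [Module K E]
    [FiniteDimensional K E] [Fintype ι] (L : ι → Submodule K E) (S : Submodule K (ι → E))
    (hS : ∀ w : ι → E, (∀ i, w i ∈ L i) → ∑ i, w i = 0 → w ∈ S) :
    ∑ i, finrank K (L i) ≤ finrank K E + finrank K S := by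
  let incl : (Π i, L i) →ₗ[K] (ι → E) :=
    LinearMap.pi fun i => (L i).subtype ∘ₗ LinearMap.proj i
  let sum : (Π i, L i) →ₗ[K] E := ∑ i, (L i).subtype ∘ₗ LinearMap.proj i
  have hker : (LinearMap.ker sum).map incl ≤ S := by
    rintro _ ⟨w, hw, rfl⟩
    exact hS _ (fun i => (w i).2) (by simpa [sum, incl] using hw)
  have hinj : Function.Injective incl := fun w w' h =>
    funext fun i => Subtype.ext (congrFun h i)
  calc ∑ i, finrank K (L i) = finrank K (Π i, L i) := (finrank_pi_fintype K).symm
    _ = finrank K (LinearMap.range sum) + finrank K (LinearMap.ker sum) :=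
      (LinearMap.finrank_range_add_finrank_ker sum).symm
    _ ≤ finrank K E + finrank K S := by
      gcongr
      · exact Submodule.finrank_le _
      · rw [(Submodule.equivMapOfInjective incl hinj _).finrank_eq]
        exact Submodule.finrank_mono hker

lemma apply_eq_zero_of_forall_lt_apply {E F : Type*} [AddCommGroup E] [Module ℝ E]
    [FunLike F E ℝ] [LinearMapClass F ℝ E ℝ] (f : F) {D : Submodule ℝ E} {c : ℝ}
    (h : ∀ d ∈ D, c < f d) {d : E} (hd : d ∈ D) : f d = 0 := by
  by_contra hfd
  have := h _ (D.smul_mem (c / f d) hd)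
  rw [map_smul, smul_eq_mul, div_mul_cancel₀ _ hfd] at this
  exact this.false

section Polytope

variable {E : Type*} [NormedAddCommGroup E] [NormedSpace ℝ E]

lemma PointedCone.exists_dual_nonpos_eq_zero_imp_mem_lineal [FiniteDimensional ℝ E]
    (T : PointedCone ℝ E) (G : Finset E) (hG : ∀ g ∈ G, g ∈ T) :
    ∃ l : StrongDual ℝ E, ∀ g ∈ G, l g ≤ 0 ∧ (l g = 0 → g ∈ T.lineal) := by
  classical
  set B := G.filter (· ∉ T.lineal)
  -- `T.lineal` is a face of `T`, so no convex combination of `B` lies in it.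
  have hdisj : Disjoint (convexHull ℝ (B : Set E)) T.lineal := by
    refine Set.disjoint_left.2 fun y hyB hyD => ?_
    obtain ⟨w, hw0, hw1, rfl⟩ := Finset.mem_convexHull'.1 hyB
    obtain ⟨b, hbB, hb⟩ :=
      Finset.exists_lt_of_sum_lt (by simp [hw1] : ∑ b ∈ B, (0 : ℝ) < ∑ b ∈ B, w b)
    rw [← Finset.sum_coe_sort] at hyD
    have := (PointedCone.IsFaceOf.lineal T).mem_of_sum_smul_mem (f := ((↑) : B → E))
      (fun b => hG b (Finset.mem_filter.1 b.2).1) (fun b => hw0 b b.2) hyD ⟨b, hbB⟩ hb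
    exact (Finset.mem_filter.1 hbB).2 this
  obtain ⟨l, u, v, hlu, huv, hvl⟩ := geometric_hahn_banach_compact_closed
    (convex_convexHull ℝ _) (B.finite_toSet.isCompact_convexHull ℝ) T.lineal.convex
    T.lineal.closed_of_finiteDimensional hdisj
  have hl0 : ∀ d ∈ T.lineal, l d = 0 := fun d hd => apply_eq_zero_of_forall_lt_apply l hvl hd
  have hv0 : v < 0 := by simpa using hvl 0 T.lineal.zero_mem
  refine ⟨l, fun g hg => ?_⟩
  by_cases hgD : g ∈ T.lineal
  · simp [hl0 g hgD, hgD]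
  · have := hlu g (subset_convexHull ℝ _ (Finset.mem_filter.2 ⟨hg, hgD⟩))
    exact ⟨by linarith, fun h => by linarith⟩

lemma mem_toExposed_convexHull_and_vectorSpan_le (V : Finset E) {x : E}
    (hx : x ∈ convexHull ℝ (V : Set E)) (D : Submodule ℝ E) (l : StrongDual ℝ E)
    (hl : ∀ v ∈ V, l (v - x) ≤ 0 ∧ (l (v - x) = 0 → v - x ∈ D)) :
    x ∈ l.toExposed (convexHull ℝ (V : Set E)) ∧
      vectorSpan ℝ (l.toExposed (convexHull ℝ (V : Set E))) ≤ D := by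
  have hmax : ∀ z ∈ convexHull ℝ (V : Set E), l z ≤ l x := by
    refine fun z hz => convexHull_min (fun v hv => ?_) (convex_halfSpace_le l.isLinear _) hz
    simpa using (hl v hv).1
  have hxF : x ∈ l.toExposed (convexHull ℝ (V : Set E)) := ⟨hx, hmax⟩
  refine ⟨hxF, ?_⟩
  rw [vectorSpan_eq_span_vsub_set_right ℝ hxF, Submodule.span_le]
  rintro _ ⟨y, ⟨hy, hymax⟩, rfl⟩
  obtain ⟨w, hw0, hw1, rfl⟩ := Finset.mem_convexHull'.1 hy
  have hyx : ∑ v ∈ V, w v • v - x = ∑ v ∈ V, w v • (v - x) := by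
    simp [smul_sub, Finset.sum_sub_distrib, ← Finset.sum_smul, hw1]
  have hterms : ∑ v ∈ V, w v * l (v - x) = 0 := calc
    _ = l (∑ v ∈ V, w v • v - x) := by simp [hyx, map_sum]
    _ = 0 := by rw [map_sub, le_antisymm (hmax _ hy) (hymax x hx), sub_self]
  change _ - x ∈ D
  rw [hyx]
  refine D.sum_mem fun v hv => ?_
  rcases (hw0 v hv).eq_or_lt with hwv | hwv
  · simp [← hwv]
  · refine D.smul_mem _ ((hl v hv).2 ?_)
    have := (Finset.sum_eq_zero_iff_of_nonpos fun u hu =>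
      mul_nonpos_of_nonneg_of_nonpos (hw0 u hu) (hl u hu).1).1 hterms v hv
    exact (mul_eq_zero.1 this).resolve_left hwv.ne'

variable [FiniteDimensional ℝ E]

lemma exists_isExposed_convexHull_vectorSpan_le_lineal (V : Finset E) {x : E}
    (hx : x ∈ convexHull ℝ (V : Set E)) :
    ∃ F, IsExposed ℝ (convexHull ℝ (V : Set E)) F ∧ x ∈ F ∧
      vectorSpan ℝ F ≤ (feasibleCone (convexHull ℝ (V : Set E)) x).lineal := by
  classical
  set P := convexHull ℝ (V : Set E)
  obtain ⟨l, hl⟩ := (feasibleCone P x).exists_dual_nonpos_eq_zero_imp_mem_lineal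
    (V.image (· - x)) <| by
      simp only [Finset.mem_image, forall_exists_index, and_imp, forall_apply_eq_imp_iff₂]
      exact fun v hv => PointedCone.subset_hull (by simpa using subset_convexHull ℝ _ hv)
  obtain ⟨hxF, hF⟩ := mem_toExposed_convexHull_and_vectorSpan_le V hx _ l
    fun v hv => hl _ (Finset.mem_image_of_mem _ hv)
  exact ⟨_, ContinuousLinearMap.toExposed.isExposed, hxF, hF⟩

lemma IsPolytope.lt_finrank_lineal_feasibleCone {P : Set E} (hP : IsPolytope P) {x : E}
    (hx : x ∈ P) {k : ℕ} (hxk : x ∉ skeleton P k) :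
    k < finrank ℝ (feasibleCone P x).lineal := by
  obtain ⟨V, rfl⟩ := hP
  obtain ⟨F, hF, hxF, hFle⟩ := exists_isExposed_convexHull_vectorSpan_le_lineal V hx
  by_contra! hle
  exact hxk ⟨F, hF, (Submodule.finrank_mono hFle).trans hle, hxF⟩

lemma finrank_lineal_feasibleCone_le_of_mem_skeleton {C : Set E} (hC : Convex ℝ C) {x : E}
    {m : ℕ} (hx : x ∈ skeleton C m) : finrank ℝ (feasibleCone C x).lineal ≤ m := by
  obtain ⟨F, hF, hFm, hxF⟩ := hx
  exact (Submodule.finrank_mono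
    (hF.isExtreme.lineal_feasibleCone_le_vectorSpan hC hxF)).trans hFm

end Polytope

theorem skeleton_point_has_coordinate_in_skeleton_general (n d k : ℕ)
    (hn : n.Prime) (hkn : d ≤ k * n)
    (P : Set (EuclideanSpace ℝ (Fin d))) (hP : IsPolytope P)
    (x : Fin n → EuclideanSpace ℝ (Fin d))
    (hx : x ∈ skeleton
      {y : Fin n → EuclideanSpace ℝ (Fin d) | (∀ i, y i ∈ P) ∧ ∑ i, y i = 0} (n - 1)) :
    ∃ i, x i ∈ skeleton P k := by
  by_contra! hxP
  have hxC := skeleton_subset _ _ hx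
  have hcount := sum_finrank_le_finrank_add_finrank (fun i => (feasibleCone P (x i)).lineal) _
    fun w hw hsum => mem_lineal_feasibleCone_of_sum_eq_zero hP.convex hxC hw hsum
  have hlower : n * (k + 1) ≤ ∑ i, finrank ℝ (feasibleCone P (x i)).lineal := by
    simpa using Finset.sum_le_sum fun i (_ : i ∈ Finset.univ) =>
      Nat.succ_le_of_lt (hP.lt_finrank_lineal_feasibleCone (hxC.1 i) (hxP i))
  have hupper :=
    finrank_lineal_feasibleCone_le_of_mem_skeleton hP.convex.setOf_forall_mem_sum_eq_zero hx
  rw [finrank_euclideanSpace_fin] at hcount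
  have := hn.pos
  have : n * (k + 1) = k * n + n := by ring
  omega

/-- Let `P ⊆ ℝ^d` be a `d`-polytope with `0` in its interior, `n` prime, `k ≥ 1` with
`k·n ≥ d`. Every point `(x₁,…,xₙ)` of the `(n−1)`-skeleton of `C = Pⁿ ∩ W_n^{⊕d}` has
some coordinate `xᵢ` in the `k`-skeleton of `P`. -/
theorem skeleton_point_has_coordinate_in_skeleton (n d k : ℕ)
    (hn : n.Prime) (hk : 0 < k) (hkn : d ≤ k * n)
    (P : Set (EuclideanSpace ℝ (Fin d))) (hP : IsPolytope P) (hPdim : polyDim P = d)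
    (h0 : (0 : EuclideanSpace ℝ (Fin d)) ∈ interior P)
    (x : Fin n → EuclideanSpace ℝ (Fin d))
    (hx : x ∈ skeleton
      {y : Fin n → EuclideanSpace ℝ (Fin d) | (∀ i, y i ∈ P) ∧ ∑ i, y i = 0} (n - 1)) :
    ∃ i, x i ∈ skeleton P k :=
  skeleton_point_has_coordinate_in_skeleton_general n d k hn hkn P hP x hx
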